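/- arXiv:1711.08826 — 2 statements merged into one kernel-verified Lean document; each statement's English description precedes it below -/
import Mathlib

section
/- Let X be a Banach function space on the unit circle T and let K ∈ L¹(T) be a nonnegative function with K(e^{iθ}) = K(e^{-iθ}) for almost all θ ∈ [-π, π]. If the convolution operator C_K f = f * K is bounded on the associate space X', then C_K is bounded on X with operator norm at most ‖C_K‖_{B(X')}. -/
/-!
`|f * K| ≤ |f| * K` pointwise, so it suffices to bound `ρ(|f| * K)`. By the Lorentz–Luxemburg
inequality `ρ ≤ ρ''` (Hahn–Banach in `L²` for bounded functions, then the Fatou axiom), `ρ(h)` is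
at most the supremum of `∫ h g` over the unit ball of `X'`, and truncating and periodising `g`
reduces this to bounded `2π`-periodic `g`. For those, Fubini, translation invariance of `μT` and
the evenness of `K` move the convolution onto `g`:
`∫ (|f| * K) g = ∫ |f| (g * K) ≤ ρ(f) ρ'(g * K) ≤ ‖C_K‖_{B(X')}`.
-/

open MeasureTheory Real Set Filter Topology
open scoped ENNReal NNReal Classical

noncomputable section

/-- Normalized Lebesgue measure on the circle, modeled on `(-π, π]`. -/
def μT : Measure ℝ := (ENNReal.ofReal (2 * π))⁻¹ • (volume.restrict (Set.Ioc (-π) π))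

/-- A Banach function norm in the sense of Bennett–Sharpley (axioms (A1)–(A5)),
on the circle modeled as `(-π, π]` with normalized Lebesgue measure `μT`. -/
structure BFNorm where
  ρ : (ℝ → ℝ≥0∞) → ℝ≥0∞
  eq_zero_iff : ∀ f : ℝ → ℝ≥0∞, Measurable f → (ρ f = 0 ↔ f =ᵐ[μT] 0)
  smul : ∀ (c : ℝ≥0∞) (f : ℝ → ℝ≥0∞), Measurable f → ρ (fun x => c * f x) = c * ρ f
  add_le : ∀ f g : ℝ → ℝ≥0∞, Measurable f → Measurable g →
    ρ (fun x => f x + g x) ≤ ρ f + ρ g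
  mono : ∀ f g : ℝ → ℝ≥0∞, Measurable f → Measurable g →
    (∀ᵐ x ∂μT, f x ≤ g x) → ρ f ≤ ρ g
  fatou : ∀ f : ℕ → ℝ → ℝ≥0∞, (∀ n, Measurable (f n)) →
    (∀ n, ∀ᵐ x ∂μT, f n x ≤ f (n + 1) x) →
    ρ (fun x => ⨆ n, f n x) = ⨆ n, ρ (f n)
  finite_on_char : ∀ E : Set ℝ, MeasurableSet E → ρ (E.indicator 1) < ⊤
  embeds_L1 : ∀ E : Set ℝ, MeasurableSet E → ∃ C : ℝ≥0∞, C ≠ 0 ∧ C ≠ ⊤ ∧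
    ∀ f : ℝ → ℝ≥0∞, Measurable f → ∫⁻ x in E, f x ∂μT ≤ C * ρ f

/-- The (extended-real-valued) norm of a complex-valued function in the Banach
function space given by the Banach function norm `N`. -/
def BFNorm.normC (N : BFNorm) (f : ℝ → ℂ) : ℝ≥0∞ := N.ρ (fun x => (‖f x‖₊ : ℝ≥0∞))

/-- The associate norm `ρ'` of a Banach function norm. -/
def BFNorm.assoc (N : BFNorm) (g : ℝ → ℝ≥0∞) : ℝ≥0∞ :=
  ⨆ f ∈ {f : ℝ → ℝ≥0∞ | Measurable f ∧ N.ρ f ≤ 1}, ∫⁻ x, f x * g x ∂μT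

/-- The associate norm applied to a complex-valued function: the norm of the
associate space (Köthe dual) `X'`. -/
def BFNorm.assocC (N : BFNorm) (g : ℝ → ℂ) : ℝ≥0∞ := N.assoc (fun x => (‖g x‖₊ : ℝ≥0∞))

/-- Convolution on the circle: `(f*K)(e^{iθ}) = (1/2π) ∫_{-π}^{π} f(e^{i(θ-φ)}) K(e^{iφ}) dφ`. -/
def conv (f K : ℝ → ℂ) (θ : ℝ) : ℂ := (2 * π)⁻¹ • ∫ φ in (-π)..π, f (θ - φ) * K φ

/-- The operator "norm" of the convolution operator `C_K : f ↦ f * K` with respect to a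
given extended-real-valued norm `N`, as a supremum over the unit ball of (measurable,
2π-periodic) functions. -/
def convOpNorm (N : (ℝ → ℂ) → ℝ≥0∞) (K : ℝ → ℂ) : ℝ≥0∞ :=
  ⨆ f ∈ {f : ℝ → ℂ | Measurable f ∧ Function.Periodic f (2 * π) ∧ N f ≤ 1}, N (conv f K)

/-- The weight of the paper: `w(e^{iθ}) = √m` for `π/(2m) ≤ |θ| ≤ π/(2m-1)` and
`w(e^{iθ}) = 1` otherwise (in particular for `π/(2m+1) < |θ| < π/(2m)`). -/
def wght (θ : ℝ) : ℝ :=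
  1 + ∑' m : ℕ, (Real.sqrt ((m : ℝ) + 1) - 1) *
      Set.indicator {x : ℝ | π / (2 * ((m : ℝ) + 1)) ≤ |x| ∧ |x| ≤ π / (2 * ((m : ℝ) + 1) - 1)}
        (fun _ => (1 : ℝ)) θ

/-- The `n`-th Fejér kernel `F_n(e^{iθ}) = Σ_{k=-n}^{n} (1 - |k|/(n+1)) e^{ikθ}`. -/
def fejer (n : ℕ) (θ : ℝ) : ℂ :=
  ∑ k ∈ Finset.Icc (-(n : ℤ)) (n : ℤ),
    ((1 - |(k : ℝ)| / ((n : ℝ) + 1) : ℝ) : ℂ) * Complex.exp (Complex.I * k * θ)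

/-- The `n`-th Fourier coefficient `f̂(n) = (1/2π) ∫_{-π}^{π} f(e^{iθ}) e^{-inθ} dθ`. -/
def fourierCoeff' (f : ℝ → ℂ) (n : ℤ) : ℂ :=
  (2 * π)⁻¹ • ∫ θ in (-π)..π, f θ * Complex.exp (-(Complex.I * n * θ))

/-- `sup_{0≤r<1} M_p(r,F)^p` for a function `F` on the unit disk: `F ∈ H^p(𝔻)` iff this
is finite (together with analyticity). -/
def HpNorm (p : ℝ) (F : ℂ → ℂ) : ℝ≥0∞ :=
  ⨆ r ∈ Set.Ico (0 : ℝ) 1,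
    ∫⁻ θ, ((‖F ((r : ℂ) * Complex.exp (Complex.I * θ))‖₊ : ℝ≥0∞)) ^ p ∂μT

/-- The Poisson kernel `P(r,θ) = (1-r²)/(1-2r cos θ + r²)`. -/
def poissonK (r θ : ℝ) : ℝ := (1 - r ^ 2) / (1 - 2 * r * Real.cos θ + r ^ 2)

instance : IsFiniteMeasure μT := by
  refine ⟨?_⟩
  rw [μT, Measure.smul_apply, Measure.restrict_apply_univ, smul_eq_mul]
  exact ENNReal.mul_lt_top (by simp [pi_pos]) measure_Ioc_lt_top

theorem Function.Periodic.lintegral_μT_comp_sub {F : ℝ → ℝ≥0∞} (hF : Function.Periodic F (2 * π))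
    (φ : ℝ) : ∫⁻ θ, F (θ - φ) ∂μT = ∫⁻ θ, F θ ∂μT := by
  have hpre : (· - φ) ⁻¹' Ioc (-π - φ) (-π - φ + 2 * π) = Ioc (-π) (-π + 2 * π) := by
    rw [preimage_sub_const_Ioc]; ring_nf
  have hshift := (measurePreserving_sub_right volume φ).setLIntegral_comp_preimage_emb
    (Homeomorph.subRight φ).measurableEmbedding F (Ioc (-π - φ) (-π - φ + 2 * π))
  have : VAddInvariantMeasure (AddSubgroup.zmultiples (2 * π)) ℝ volume :=
    ⟨fun c s _ => measure_preimage_add _ _ _⟩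
  have hdom := (isAddFundamentalDomain_Ioc two_pi_pos (-π - φ)).setLIntegral_eq
    (isAddFundamentalDomain_Ioc two_pi_pos (-π)) F hF.map_vadd_zmultiples
  rw [hpre] at hshift
  rw [μT, lintegral_smul_measure, lintegral_smul_measure, show -π + 2 * π = π by ring] at *
  rw [hshift, hdom]

theorem lintegral_μT_comp_neg (F : ℝ → ℝ≥0∞) : ∫⁻ θ, F (-θ) ∂μT = ∫⁻ θ, F θ ∂μT := by
  have hpre : Neg.neg ⁻¹' Ioc (-π) π = Ico (-π) π := by simp
  have hneg := (Measure.measurePreserving_neg volume).setLIntegral_comp_preimage_emb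
    (Homeomorph.neg ℝ).measurableEmbedding F (Ioc (-π) π)
  rw [hpre, setLIntegral_congr Ico_ae_eq_Ioc] at hneg
  rw [μT, lintegral_smul_measure, lintegral_smul_measure]
  exact congrArg _ hneg

theorem measurable_toIocMod_two_pi : Measurable (toIocMod two_pi_pos (-π)) := by
  have hfloor : toIocMod two_pi_pos (-π) = fun b => b + ⌊(-π + 2 * π - b) / (2 * π)⌋ * (2 * π) := by
    funext b
    rw [toIocMod, toIocDiv_eq_neg_floor, zsmul_eq_mul]
    push_cast
    ring
  rw [hfloor]
  exact measurable_id.add <| (measurable_from_top.comp <| Int.measurable_floor.comp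
    ((measurable_const.sub measurable_id).div_const _)).mul_const _

theorem toIocMod_two_pi_ae_eq_id : toIocMod two_pi_pos (-π) =ᵐ[μT] id := by
  rw [μT]
  refine Measure.ae_smul_measure ((ae_restrict_iff' measurableSet_Ioc).2 (ae_of_all _ ?_)) _
  intro θ hθ
  rw [id, toIocMod_eq_self]
  convert hθ using 2
  ring

section

variable {α : Type*} [MeasurableSpace α] {μ : Measure α}

theorem MeasureTheory.Lp.measurable_ofReal {p : ℝ≥0∞} (ξ : Lp ℝ p μ) :
    Measurable fun x => ENNReal.ofReal (ξ x) :=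
  (Lp.stronglyMeasurable ξ).measurable.ennreal_ofReal

theorem ENNReal.iSup_min_natCast (a : ℝ≥0∞) : ⨆ n : ℕ, min a n = a := by
  rw [← inf_iSup_eq, ENNReal.iSup_natCast, inf_top_eq]

theorem ENNReal.ofReal_toReal_mul {a : ℝ≥0∞} (ha : a ≠ ⊤) (r : ℝ) :
    ENNReal.ofReal (a.toReal * r) = a * ENNReal.ofReal r := by
  rw [ENNReal.ofReal_mul ENNReal.toReal_nonneg, ENNReal.ofReal_toReal ha]

theorem lintegral_min_mul_eq_iSup {f g : α → ℝ≥0∞} (hf : Measurable f) (hg : Measurable g) :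
    ∫⁻ x, f x * g x ∂μ = ⨆ n : ℕ, ∫⁻ x, min (f x) n * g x ∂μ := by
  rw [← lintegral_iSup (f := fun n x => min (f x) n * g x)
    (fun n => (hf.min measurable_const).mul hg)]
  · simp_rw [← ENNReal.iSup_mul, ENNReal.iSup_min_natCast]
  · intro m n hmn x
    exact mul_le_mul_left (min_le_min le_rfl (Nat.cast_le.2 hmn)) _

theorem ofReal_integral_le_lintegral_ofReal {f : α → ℝ} (hf : Integrable f μ) :
    ENNReal.ofReal (∫ x, f x ∂μ) ≤ ∫⁻ x, ENNReal.ofReal (f x) ∂μ := by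
  rw [integral_eq_lintegral_pos_part_sub_lintegral_neg_part hf]
  exact ENNReal.ofReal_le_of_le_toReal (sub_le_self _ ENNReal.toReal_nonneg)

theorem memLp_toReal_of_le [IsFiniteMeasure μ] {a : α → ℝ≥0∞} (ha : Measurable a) {C : ℝ≥0∞}
    (hC : C ≠ ⊤) (haC : ∀ x, a x ≤ C) (p : ℝ≥0∞) : MemLp (fun x => (a x).toReal) p μ := by
  refine (memLp_top_of_bound ha.ennreal_toReal.aestronglyMeasurable C.toReal
    (ae_of_all _ fun x => ?_)).mono_exponent le_top
  rw [Real.norm_of_nonneg ENNReal.toReal_nonneg]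
  exact ENNReal.toReal_mono hC (haC x)

theorem MeasureTheory.Integrable.toReal_mul_of_le {w : α → ℝ} (hw : Integrable w μ) {a : α → ℝ≥0∞}
    (ha : Measurable a) {C : ℝ≥0∞} (hC : C ≠ ⊤) (haC : ∀ x, a x ≤ C) :
    Integrable (fun x => (a x).toReal * w x) μ :=
  hw.bdd_mul ha.ennreal_toReal.aestronglyMeasurable (ae_of_all _ fun x => by
    rw [Real.norm_of_nonneg ENNReal.toReal_nonneg]; exact ENNReal.toReal_mono hC (haC x))

end

namespace BFNorm

variable (N : BFNorm)

theorem rho_congr_ae {f g : ℝ → ℝ≥0∞} (hf : Measurable f) (hg : Measurable g)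
    (h : f =ᵐ[μT] g) : N.ρ f = N.ρ g :=
  le_antisymm (N.mono f g hf hg h.le) (N.mono g f hg hf h.symm.le)

theorem rho_le_of_tendsto_ae {f : ℕ → ℝ → ℝ≥0∞} {g : ℝ → ℝ≥0∞} (hf : ∀ n, Measurable (f n))
    (hg : Measurable g) (hfg : ∀ᵐ x ∂μT, Tendsto (fun n => f n x) atTop (𝓝 (g x)))
    {c : ℝ≥0∞} (hc : ∀ n, N.ρ (f n) ≤ c) : N.ρ g ≤ c := by
  set w : ℕ → ℝ → ℝ≥0∞ := fun n x => ⨅ k ≥ n, f k x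
  have hw : ∀ n, Measurable (w n) := fun n => .iInf fun k => .iInf fun _ => hf k
  have hg_le : ∀ᵐ x ∂μT, g x ≤ ⨆ n, w n x := by
    filter_upwards [hfg] with x hx
    rw [← hx.liminf_eq, liminf_eq_iSup_iInf_of_nat]
  calc N.ρ g ≤ N.ρ (fun x => ⨆ n, w n x) := N.mono _ _ hg (.iSup hw) hg_le
    _ = ⨆ n, N.ρ (w n) :=
      N.fatou w hw fun n => ae_of_all _ fun x => iInf₂_mono' fun k hk => ⟨k, by omega, le_rfl⟩
    _ ≤ c := iSup_le fun n => (N.mono _ _ (hw n) (hf n) (ae_of_all _ fun x =>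
      iInf₂_le n le_rfl)).trans (hc n)

theorem rho_eq_iSup_min {h : ℝ → ℝ≥0∞} (hh : Measurable h) :
    N.ρ h = ⨆ n : ℕ, N.ρ (fun x => min (h x) n) := by
  conv_lhs => rw [show h = fun x => ⨆ n : ℕ, min (h x) n from
    funext fun x => (ENNReal.iSup_min_natCast _).symm]
  exact N.fatou _ (fun n => hh.min measurable_const) fun n => ae_of_all _ fun x => by gcongr; simp

theorem lintegral_mul_le_assoc {v : ℝ → ℝ≥0∞} (hv : Measurable v) (hv1 : N.ρ v ≤ 1)
    (g : ℝ → ℝ≥0∞) : ∫⁻ x, v x * g x ∂μT ≤ N.assoc g :=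
  le_iSup₂_of_le v ⟨hv, hv1⟩ le_rfl

theorem assoc_le {g : ℝ → ℝ≥0∞} {c : ℝ≥0∞}
    (h : ∀ v, Measurable v → N.ρ v ≤ 1 → ∫⁻ x, v x * g x ∂μT ≤ c) : N.assoc g ≤ c :=
  iSup₂_le fun v hv => h v hv.1 hv.2

theorem assoc_mono_ae {g₁ g₂ : ℝ → ℝ≥0∞} (h : g₁ ≤ᵐ[μT] g₂) : N.assoc g₁ ≤ N.assoc g₂ :=
  iSup₂_mono fun _ _ => lintegral_mono_ae (h.mono fun _ hx => by gcongr)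

def posUnitBallL2 : Set (Lp ℝ 2 μT) := {ξ | N.ρ (fun x => ENNReal.ofReal (ξ x)) ≤ 1}

theorem zero_mem_posUnitBallL2 : 0 ∈ N.posUnitBallL2 := by
  refine ((N.eq_zero_iff _ (Lp.measurable_ofReal 0)).2 ?_).le.trans zero_le_one
  filter_upwards [Lp.coeFn_zero ℝ 2 μT] with x hx
  simp only [hx, Pi.zero_apply, ENNReal.ofReal_zero]

theorem convex_posUnitBallL2 : Convex ℝ N.posUnitBallL2 := by
  intro ξ₁ hξ₁ ξ₂ hξ₂ a b ha hb hab
  have hm₁ := (Lp.measurable_ofReal ξ₁).const_mul (ENNReal.ofReal a)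
  have hm₂ := (Lp.measurable_ofReal ξ₂).const_mul (ENNReal.ofReal b)
  calc N.ρ (fun x => ENNReal.ofReal ((a • ξ₁ + b • ξ₂) x))
      ≤ N.ρ (fun x => ENNReal.ofReal a * ENNReal.ofReal (ξ₁ x) +
          ENNReal.ofReal b * ENNReal.ofReal (ξ₂ x)) := by
        refine N.mono _ _ (Lp.measurable_ofReal _) (hm₁.add hm₂) ?_
        filter_upwards [Lp.coeFn_add (a • ξ₁) (b • ξ₂), Lp.coeFn_smul a ξ₁,
          Lp.coeFn_smul b ξ₂] with x h₁ h₂ h₃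
        rw [h₁, Pi.add_apply, h₂, h₃, Pi.smul_apply, Pi.smul_apply, smul_eq_mul, smul_eq_mul,
          ← ENNReal.ofReal_mul ha, ← ENNReal.ofReal_mul hb]
        exact ENNReal.ofReal_add_le
    _ ≤ ENNReal.ofReal a * N.ρ (fun x => ENNReal.ofReal (ξ₁ x)) +
          ENNReal.ofReal b * N.ρ (fun x => ENNReal.ofReal (ξ₂ x)) := by
        rw [← N.smul _ _ (Lp.measurable_ofReal ξ₁), ← N.smul _ _ (Lp.measurable_ofReal ξ₂)]
        exact N.add_le _ _ hm₁ hm₂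
    _ ≤ ENNReal.ofReal a * 1 + ENNReal.ofReal b * 1 := by
        gcongr
        exacts [hξ₁, hξ₂]
    _ = 1 := by rw [mul_one, mul_one, ← ENNReal.ofReal_add ha hb, hab, ENNReal.ofReal_one]

theorem isClosed_posUnitBallL2 : IsClosed N.posUnitBallL2 := by
  refine isSeqClosed_iff_isClosed.1 fun ξ ξlim hξ hlim => ?_
  obtain ⟨ns, -, hae⟩ := (tendstoInMeasure_of_tendsto_Lp hlim).exists_seq_tendsto_ae
  exact N.rho_le_of_tendsto_ae (fun n => Lp.measurable_ofReal (ξ (ns n)))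
    (Lp.measurable_ofReal ξlim)
    (hae.mono fun x hx => (ENNReal.continuous_ofReal.tendsto _).comp hx) fun n => hξ (ns n)

/-- Hahn–Banach in `L²(μT)`, with the separating functional represented by Riesz and
normalised so that the separating level is `1`. -/
theorem exists_separating_integrable {h : ℝ → ℝ≥0∞} (hh : Measurable h) {C : ℝ≥0∞}
    (hC : C ≠ ⊤) (hhC : ∀ x, h x ≤ C) (hρ : 1 < N.ρ h) :
    ∃ w : ℝ → ℝ, Measurable w ∧ Integrable w μT ∧
      (∀ ξ ∈ N.posUnitBallL2, ∫ x, ξ x * w x ∂μT < 1) ∧ 1 < ∫ x, (h x).toReal * w x ∂μT := by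
  have hL2 := memLp_toReal_of_le (μ := μT) hh hC hhC 2
  have hnot : hL2.toLp _ ∉ N.posUnitBallL2 := by
    refine fun hmem => hρ.not_ge (le_trans (le_of_eq ?_) hmem)
    refine N.rho_congr_ae hh (Lp.measurable_ofReal _) ?_
    filter_upwards [hL2.coeFn_toLp] with x hx
    rw [hx, ENNReal.ofReal_toReal (ne_top_of_le_ne_top hC (hhC x))]
  obtain ⟨φ, u, hball, hhu⟩ :=
    geometric_hahn_banach_closed_point N.convex_posUnitBallL2 N.isClosed_posUnitBallL2 hnot
  set w := (InnerProductSpace.toDual ℝ (Lp ℝ 2 μT)).symm φ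
  have hφ : ∀ ξ : Lp ℝ 2 μT, φ ξ = ∫ x, ξ x * w x ∂μT := fun ξ => by
    rw [← InnerProductSpace.toDual_symm_apply, L2.inner_def]
    simp [w]
  have hu : 0 < u := by simpa using hball 0 N.zero_mem_posUnitBallL2
  refine ⟨fun x => w x / u, (Lp.stronglyMeasurable w).measurable.div_const u,
    ((Lp.memLp w).integrable one_le_two).div_const u, fun ξ hξ => ?_, ?_⟩
  · simp_rw [mul_div_assoc', integral_div, ← hφ]
    exact (div_lt_one hu).2 (hball ξ hξ)
  · simp_rw [mul_div_assoc', integral_div]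
    have hφh : φ (hL2.toLp _) = ∫ x, (h x).toReal * w x ∂μT :=
      (hφ _).trans (integral_congr_ae (hL2.coeFn_toLp.mono fun x hx => by simp only [hx]))
    rwa [one_lt_div hu, ← hφh]

theorem assoc_ofReal_le_one {w : ℝ → ℝ} (hwm : Measurable w) (hwi : Integrable w μT)
    (hball : ∀ ξ ∈ N.posUnitBallL2, ∫ x, ξ x * w x ∂μT < 1) :
    N.assoc (fun x => ENNReal.ofReal (w x)) ≤ 1 := by
  refine N.assoc_le fun v hv hv1 => ?_
  rw [lintegral_min_mul_eq_iSup hv hwm.ennreal_ofReal]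
  refine iSup_le fun n => ?_
  -- Cutting `min v n` down to `{w > 0}` puts it in the ball without changing the pairing.
  set a := {x | 0 < w x}.indicator fun x => min (v x) n
  have ha : Measurable a :=
    (hv.min measurable_const).indicator (measurableSet_lt measurable_const hwm)
  have han : ∀ x, a x ≤ n := fun x => (indicator_le_self _ _ x).trans (min_le_right _ _)
  have ha_top : ∀ x, a x ≠ ⊤ := fun x => ne_top_of_le_ne_top (ENNReal.natCast_ne_top n) (han x)
  have hL2 := memLp_toReal_of_le (μ := μT) ha (ENNReal.natCast_ne_top n) han 2
  have hmem : hL2.toLp _ ∈ N.posUnitBallL2 := by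
    refine le_trans (le_of_eq (N.rho_congr_ae (Lp.measurable_ofReal _) ha ?_)) <|
      (N.mono _ _ ha hv (ae_of_all _ fun x => (indicator_le_self _ _ x).trans
        (min_le_left _ _))).trans hv1
    filter_upwards [hL2.coeFn_toLp] with x hx
    rw [hx, ENNReal.ofReal_toReal (ha_top x)]
  calc ∫⁻ x, min (v x) n * ENNReal.ofReal (w x) ∂μT
      = ∫⁻ x, ENNReal.ofReal ((a x).toReal * w x) ∂μT := by
        refine lintegral_congr fun x => ?_
        rw [ENNReal.ofReal_toReal_mul (ha_top x)]
        by_cases hx : 0 < w x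
        · simp [a, hx]
        · simp [a, hx, ENNReal.ofReal_eq_zero.2 (not_lt.1 hx)]
    _ = ENNReal.ofReal (∫ x, (a x).toReal * w x ∂μT) := by
        refine (ofReal_integral_eq_lintegral_ofReal
          (hwi.toReal_mul_of_le ha (ENNReal.natCast_ne_top n) han) (ae_of_all _ fun x => ?_)).symm
        by_cases hx : 0 < w x
        · exact mul_nonneg ENNReal.toReal_nonneg hx.le
        · simp [a, hx]
    _ ≤ 1 := by
        refine ENNReal.ofReal_le_one.2 (le_of_lt ?_)
        refine lt_of_eq_of_lt (integral_congr_ae ?_) (hball _ hmem)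
        filter_upwards [hL2.coeFn_toLp] with x hx
        rw [hx]

theorem exists_one_lt_lintegral_mul {h : ℝ → ℝ≥0∞} (hh : Measurable h) {C : ℝ≥0∞}
    (hC : C ≠ ⊤) (hhC : ∀ x, h x ≤ C) (hρ : 1 < N.ρ h) :
    ∃ g, Measurable g ∧ N.assoc g ≤ 1 ∧ 1 < ∫⁻ x, h x * g x ∂μT := by
  obtain ⟨w, hwm, hwi, hball, hhw⟩ := N.exists_separating_integrable hh hC hhC hρ
  refine ⟨fun x => ENNReal.ofReal (w x), hwm.ennreal_ofReal,
    N.assoc_ofReal_le_one hwm hwi hball, ?_⟩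
  calc 1 < ENNReal.ofReal (∫ x, (h x).toReal * w x ∂μT) := by
        rwa [← ENNReal.ofReal_one, ENNReal.ofReal_lt_ofReal_iff (zero_lt_one.trans hhw)]
    _ ≤ ∫⁻ x, ENNReal.ofReal ((h x).toReal * w x) ∂μT :=
        ofReal_integral_le_lintegral_ofReal (hwi.toReal_mul_of_le hh hC hhC)
    _ = ∫⁻ x, h x * ENNReal.ofReal (w x) ∂μT := by
        simp_rw [ENNReal.ofReal_toReal_mul (ne_top_of_le_ne_top hC (hhC _))]

theorem rho_le_of_forall_lintegral_mul_le_of_le {h : ℝ → ℝ≥0∞} (hh : Measurable h) {C : ℝ≥0∞}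
    (hC : C ≠ ⊤) (hhC : ∀ x, h x ≤ C) {c : ℝ≥0∞}
    (hc : ∀ g, Measurable g → N.assoc g ≤ 1 → ∫⁻ x, h x * g x ∂μT ≤ c) : N.ρ h ≤ c := by
  by_contra! hlt
  obtain ⟨c', hcc', hc'ρ⟩ := exists_between hlt
  have hc'0 : c' ≠ 0 := (zero_le.trans_lt hcc').ne'
  have hc'inv : c'⁻¹ ≠ ⊤ := ENNReal.inv_ne_top.2 hc'0
  obtain ⟨g, hg, hg1, hhg⟩ := N.exists_one_lt_lintegral_mul (hh.const_mul c'⁻¹)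
    (ENNReal.mul_ne_top hc'inv hC) (fun x => mul_le_mul_right (hhC x) _) (by
      rwa [N.smul _ _ hh, ← ENNReal.div_eq_inv_mul,
        ENNReal.lt_div_iff_mul_lt (.inl hc'0) (.inl hc'ρ.ne_top), one_mul])
  simp_rw [mul_assoc] at hhg
  rw [lintegral_const_mul' _ _ hc'inv, ← ENNReal.div_eq_inv_mul,
    ENNReal.lt_div_iff_mul_lt (.inl hc'0) (.inl hc'ρ.ne_top), one_mul] at hhg
  exact (hcc'.trans hhg).not_ge (hc g hg hg1)

/-- The Lorentz–Luxemburg inequality `ρ ≤ ρ''`. -/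
theorem rho_le_of_forall_lintegral_mul_le {h : ℝ → ℝ≥0∞} (hh : Measurable h) {c : ℝ≥0∞}
    (hc : ∀ g, Measurable g → N.assoc g ≤ 1 → ∫⁻ x, h x * g x ∂μT ≤ c) : N.ρ h ≤ c := by
  rw [N.rho_eq_iSup_min hh]
  exact iSup_le fun n => N.rho_le_of_forall_lintegral_mul_le_of_le (hh.min measurable_const)
    (ENNReal.natCast_ne_top n) (fun x => min_le_right _ _) fun g hg hg1 =>
      (lintegral_mono fun x => mul_le_mul_left (min_le_left _ _) _).trans (hc g hg hg1)

theorem rho_le_of_forall_periodic_bounded {h : ℝ → ℝ≥0∞} (hh : Measurable h) {c : ℝ≥0∞}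
    (hc : ∀ (n : ℕ) (p : ℝ → ℝ≥0∞), Measurable p → Function.Periodic p (2 * π) →
      (∀ x, p x ≤ n) → N.assoc p ≤ 1 → ∫⁻ x, h x * p x ∂μT ≤ c) : N.ρ h ≤ c := by
  refine N.rho_le_of_forall_lintegral_mul_le hh fun g hg hg1 => ?_
  simp_rw [mul_comm (h _)]
  rw [lintegral_min_mul_eq_iSup hg hh]
  refine iSup_le fun n => ?_
  set p := fun x => min (g (toIocMod two_pi_pos (-π) x)) n
  have hp : (fun x => min (g x) n) =ᵐ[μT] p :=
    toIocMod_two_pi_ae_eq_id.mono fun x hx => by simp only [p, hx, id]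
  calc ∫⁻ x, min (g x) n * h x ∂μT = ∫⁻ x, h x * p x ∂μT :=
        lintegral_congr_ae (hp.mono fun x hx => by simp only [← hx, mul_comm])
    _ ≤ c := hc n p ((hg.comp measurable_toIocMod_two_pi).min measurable_const)
        (fun x => by simp only [p, toIocMod_add_right]) (fun x => min_le_right _ _)
        ((N.assoc_mono_ae (hp.symm.le.trans (ae_of_all _ fun x => min_le_left _ _))).trans hg1)

end BFNorm

theorem Complex.enorm_real (r : ℝ) : ‖(r : ℂ)‖ₑ = ‖r‖ₑ := by
  rw [enorm_eq_nnnorm, enorm_eq_nnnorm, Complex.nnnorm_real]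

theorem conv_eq_integral (f K : ℝ → ℂ) (θ : ℝ) :
    conv f K θ = ∫ φ, f (θ - φ) * K φ ∂μT := by
  rw [conv, intervalIntegral.integral_of_le (by linarith [pi_pos]), μT, integral_smul_measure,
    ENNReal.toReal_inv, ENNReal.toReal_ofReal two_pi_pos.le]

theorem measurable_conv {f K : ℝ → ℂ} (hf : Measurable f) (hK : Measurable K) :
    Measurable (conv f K) := by
  rw [show conv f K = fun θ => ∫ φ, f (θ - φ) * K φ ∂μT from funext (conv_eq_integral f K)]
  have hprod : StronglyMeasurable fun q : ℝ × ℝ => f (q.1 - q.2) * K q.2 :=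
    ((hf.comp (measurable_fst.sub measurable_snd)).mul (hK.comp measurable_snd)).stronglyMeasurable
  exact (hprod.integral_prod_right' (ν := μT)).measurable

theorem enorm_conv_le (f K : ℝ → ℂ) (θ : ℝ) :
    ‖conv f K θ‖ₑ ≤ ∫⁻ φ, ‖f (θ - φ)‖ₑ * ‖K φ‖ₑ ∂μT := by
  rw [conv_eq_integral]
  simpa only [enorm_mul] using
    enorm_integral_le_lintegral_enorm (μ := μT) fun φ => f (θ - φ) * K φ

theorem enorm_conv_of_nonneg {p : ℝ → ℝ≥0∞} (hp : Measurable p) {C : ℝ≥0∞} (hC : C ≠ ⊤)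
    (hpC : ∀ x, p x ≤ C) {K : ℝ → ℝ} (hK : Integrable K μT) (hK0 : ∀ᵐ φ ∂μT, 0 ≤ K φ) (θ : ℝ) :
    ‖conv (fun x => ((p x).toReal : ℂ)) (fun x => (K x : ℂ)) θ‖ₑ =
      ∫⁻ φ, p (θ - φ) * ‖K φ‖ₑ ∂μT := by
  have hint : Integrable (fun φ => (p (θ - φ)).toReal * K φ) μT :=
    hK.toReal_mul_of_le (hp.comp (measurable_const.sub measurable_id)) hC fun _ => hpC _
  have hnn : 0 ≤ᵐ[μT] fun φ => (p (θ - φ)).toReal * K φ :=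
    hK0.mono fun φ hφ => mul_nonneg ENNReal.toReal_nonneg hφ
  simp_rw [conv_eq_integral, ← Complex.ofReal_mul]
  rw [integral_complex_ofReal, Complex.enorm_real, Real.enorm_of_nonneg (integral_nonneg_of_ae hnn),
    ofReal_integral_eq_lintegral_ofReal hint hnn]
  refine lintegral_congr_ae (hK0.mono fun φ hφ => ?_)
  dsimp only
  rw [ENNReal.ofReal_mul ENNReal.toReal_nonneg,
    ENNReal.ofReal_toReal (ne_top_of_le_ne_top hC (hpC _)), Real.enorm_of_nonneg hφ]

theorem lintegral_conv_mul_eq_of_even {A B p : ℝ → ℝ≥0∞} (hA : Measurable A)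
    (hB : Measurable B) (hp : Measurable p) (hAper : Function.Periodic A (2 * π))
    (hpper : Function.Periodic p (2 * π)) (hBeven : ∀ᵐ φ ∂μT, B (-φ) = B φ) :
    ∫⁻ θ, (∫⁻ φ, A (θ - φ) * B φ ∂μT) * p θ ∂μT =
      ∫⁻ θ, A θ * ∫⁻ φ, p (θ - φ) * B φ ∂μT ∂μT := by
  have hmeas : Measurable fun q : ℝ × ℝ => A (q.1 - q.2) * B q.2 * p q.1 :=
    ((hA.comp (measurable_fst.sub measurable_snd)).mul (hB.comp measurable_snd)).mul
      (hp.comp measurable_fst)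
  have hmeas' : Measurable fun q : ℝ × ℝ => A q.2 * B q.1 * p (q.2 + q.1) :=
    ((hA.comp measurable_snd).mul (hB.comp measurable_fst)).mul
      (hp.comp (measurable_snd.add measurable_fst))
  calc ∫⁻ θ, (∫⁻ φ, A (θ - φ) * B φ ∂μT) * p θ ∂μT
      = ∫⁻ φ, ∫⁻ θ, A (θ - φ) * B φ * p θ ∂μT ∂μT := by
        rw [← lintegral_lintegral_swap hmeas.aemeasurable]
        exact lintegral_congr fun θ => (lintegral_mul_const _
          ((hA.comp (measurable_const.sub measurable_id)).mul hB)).symm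
    _ = ∫⁻ φ, ∫⁻ θ, A θ * B φ * p (θ + φ) ∂μT ∂μT := lintegral_congr fun φ => by
        have hper : Function.Periodic (fun θ => A θ * B φ * p (θ + φ)) (2 * π) := fun θ => by
          simp only [hAper θ, add_right_comm θ (2 * π), hpper (θ + φ)]
        simpa only [sub_add_cancel] using hper.lintegral_μT_comp_sub φ
    _ = ∫⁻ θ, ∫⁻ φ, A θ * B (-φ) * p (θ - φ) ∂μT ∂μT := by
        rw [lintegral_lintegral_swap (f := fun φ θ => A θ * B φ * p (θ + φ)) hmeas'.aemeasurable]
        refine lintegral_congr fun θ => ?_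
        simpa only [neg_neg, sub_neg_eq_add] using
          lintegral_μT_comp_neg fun φ => A θ * B (-φ) * p (θ - φ)
    _ = ∫⁻ θ, A θ * ∫⁻ φ, p (θ - φ) * B φ ∂μT ∂μT := lintegral_congr fun θ => by
        rw [← lintegral_const_mul (f := fun φ => p (θ - φ) * B φ) _
          ((hp.comp (measurable_const.sub measurable_id)).mul hB)]
        exact lintegral_congr_ae (hBeven.mono fun φ hφ => by dsimp only; rw [hφ]; ring)

theorem lintegral_conv_enorm_mul_le_convOpNorm (N : BFNorm) {K : ℝ → ℝ} (hK : Measurable K)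
    (hKint : Integrable K μT) (hKpos : ∀ᵐ θ ∂μT, 0 ≤ K θ) (hKsym : ∀ᵐ θ ∂μT, K (-θ) = K θ)
    {f : ℝ → ℂ} (hf : Measurable f) (hfper : Function.Periodic f (2 * π)) (hf1 : N.normC f ≤ 1)
    {n : ℕ} {p : ℝ → ℝ≥0∞} (hp : Measurable p) (hpper : Function.Periodic p (2 * π))
    (hpn : ∀ x, p x ≤ n) (hp1 : N.assoc p ≤ 1) :
    ∫⁻ θ, (∫⁻ φ, ‖f (θ - φ)‖ₑ * ‖K φ‖ₑ ∂μT) * p θ ∂μT ≤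
      convOpNorm N.assocC fun θ => (K θ : ℂ) := by
  set q : ℝ → ℂ := fun x => ((p x).toReal : ℂ)
  have hq : (fun x => ‖q x‖ₑ) = p := funext fun x => by
    rw [Complex.enorm_real, Real.enorm_of_nonneg ENNReal.toReal_nonneg,
      ENNReal.ofReal_toReal (ne_top_of_le_ne_top (ENNReal.natCast_ne_top n) (hpn x))]
  calc ∫⁻ θ, (∫⁻ φ, ‖f (θ - φ)‖ₑ * ‖K φ‖ₑ ∂μT) * p θ ∂μT
      = ∫⁻ θ, ‖f θ‖ₑ * ‖conv q (fun θ => (K θ : ℂ)) θ‖ₑ ∂μT := by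
        rw [lintegral_conv_mul_eq_of_even hf.enorm hK.enorm hp (fun θ => by rw [hfper])
          hpper (hKsym.mono fun φ hφ => by rw [hφ])]
        simp only [q, enorm_conv_of_nonneg hp (ENNReal.natCast_ne_top n) hpn hKint hKpos]
    _ ≤ N.assocC (conv q fun θ => (K θ : ℂ)) := N.lintegral_mul_le_assoc hf.enorm hf1 _
    _ ≤ convOpNorm N.assocC fun θ => (K θ : ℂ) :=
        le_iSup₂_of_le q ⟨Complex.measurable_ofReal.comp hp.ennreal_toReal,
          fun x => congrArg (fun t : ℝ≥0∞ => (t.toReal : ℂ)) (hpper x),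
          show N.assoc (fun x => ‖q x‖ₑ) ≤ 1 from hq ▸ hp1⟩ le_rfl

theorem stmt_0_general (N : BFNorm) (K : ℝ → ℝ) (hKmeas : Measurable K)
    (hKpos : ∀ᵐ θ ∂μT, 0 ≤ K θ)
    (hKsym : ∀ᵐ θ ∂μT, K (-θ) = K θ)
    (hKL1 : ∫⁻ θ, (‖K θ‖₊ : ℝ≥0∞) ∂μT < ⊤) :
    convOpNorm N.normC (fun θ => (K θ : ℂ)) ≤ convOpNorm N.assocC (fun θ => (K θ : ℂ)) := by
  have hKint : Integrable K μT := ⟨hKmeas.aestronglyMeasurable, hKL1⟩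
  refine iSup₂_le fun f ⟨hf, hfper, hf1⟩ => ?_
  have hH : Measurable fun θ => ∫⁻ φ, ‖f (θ - φ)‖ₑ * ‖K φ‖ₑ ∂μT := .lintegral_prod_right'
    ((hf.comp (measurable_fst.sub measurable_snd)).enorm.mul (hKmeas.comp measurable_snd).enorm)
  calc N.normC (conv f fun θ => (K θ : ℂ))
      ≤ N.ρ fun θ => ∫⁻ φ, ‖f (θ - φ)‖ₑ * ‖K φ‖ₑ ∂μT :=
        N.mono _ _ (measurable_conv hf (Complex.measurable_ofReal.comp hKmeas)).enorm hH <|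
          ae_of_all _ fun θ => (enorm_conv_le f _ θ).trans_eq (by simp only [Complex.enorm_real])
    _ ≤ convOpNorm N.assocC fun θ => (K θ : ℂ) :=
        N.rho_le_of_forall_periodic_bounded hH fun _ _ hp hpper hpn hp1 =>
          lintegral_conv_enorm_mul_le_convOpNorm N hKmeas hKint hKpos hKsym hf hfper hf1
            hp hpper hpn hp1

/-- If the convolution operator `C_K` (with nonnegative symmetric kernel
`K ∈ L¹`) is bounded on the associate space `X'`, then it is bounded on `X` with
`‖C_K‖_{B(X)} ≤ ‖C_K‖_{B(X')}`. -/
theorem stmt_0 (N : BFNorm) (K : ℝ → ℝ) (hKmeas : Measurable K)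
    (hKper : Function.Periodic K (2 * π))
    (hKpos : ∀ᵐ θ ∂μT, 0 ≤ K θ)
    (hKsym : ∀ᵐ θ ∂μT, K (-θ) = K θ)
    (hKL1 : ∫⁻ θ, (‖K θ‖₊ : ℝ≥0∞) ∂μT < ⊤)
    (hbdd : convOpNorm N.assocC (fun θ => (K θ : ℂ)) < ⊤) :
    convOpNorm N.normC (fun θ => (K θ : ℂ)) ≤ convOpNorm N.assocC (fun θ => (K θ : ℂ)) :=
  stmt_0_general N K hKmeas hKpos hKsym hKL1
end
end

section
/- Let {K_n} be a sequence of bounded functions on T satisfying: K_n ≥ 0, K_n(e^{iθ}) = K_n(e^{-iθ}) a.e., (1/2π)∫_{-π}^{π} K_n(e^{iθ}) dθ = 1, and for each ε > 0, sup_{ε ≤ |θ| ≤ π} K_n(e^{iθ}) → 0 as n → ∞. Let w be the weight defined by w(e^{iθ}) = √m for π/(2m) ≤ |θ| ≤ π/(2m-1) and w(e^{iθ}) = 1 for π/(2m+1) < |θ| < π/(2m), m ∈ ℕ. Then sup_n ‖C_{K_n}‖_{B(L^∞(w⁻¹))} = ∞. -/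
open MeasureTheory Real Set Filter Topology
open scoped ENNReal NNReal Classical

noncomputable section

/-!
Fix `m ≥ 1` and let `[a, b] = [π/(2m), π/(2m-1)]`, on which `w = √m`. The periodized bump
`f = √m · 1_{[a,b]}` has norm `1` in `L^∞(w⁻¹)`. By localization some `K_n` is `≤ 1/2` on
`[-π, -(b-a)]`, so by symmetry and unit mean it has mass `≥ π/2` on `[-(b-a), 0]`, and still
`> π/4` on `[-(b-a), -δ]` for a small `δ > 0`. For `θ ∈ (a-δ, a)`, which lies in a gap where
`w = 1`, every `φ ∈ [-(b-a), -δ]` has `θ - φ ∈ [a, b]`, hence `(f * K_n)(θ) ≥ √m/8`.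
Thus `‖C_{K_n}‖ ≥ √m/8` for every `m`.
-/

def weightedLinftyNorm (w : ℝ → ℝ) (g : ℝ → ℂ) : ℝ≥0∞ :=
  essSup (fun θ => (‖g θ‖₊ : ℝ≥0∞) / (‖w θ‖₊ : ℝ≥0∞)) μT

lemma le_essSup_of_forall_le {α β : Type*} [MeasurableSpace α] [CompleteLinearOrder β]
    {μ : Measure α} {s : Set α} {f : α → β} {c : β} (hs : μ s ≠ 0) (h : ∀ x ∈ s, c ≤ f x) :
    c ≤ essSup f μ := by
  by_contra! hlt
  exact hs <| measure_mono_null (fun x hx => not_lt.2 (h x hx))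
    (ae_iff.1 (ae_lt_of_essSup_lt hlt))

lemma IntervalIntegrable.bdd_mul {f g : ℝ → ℝ} {a b C : ℝ}
    (hg : IntervalIntegrable g volume a b) (hf : Measurable f) (hfC : ∀ x, |f x| ≤ C) :
    IntervalIntegrable (fun x => f x * g x) volume a b :=
  ⟨hg.1.bdd_mul hf.aestronglyMeasurable (ae_of_all _ hfC),
    hg.2.bdd_mul hf.aestronglyMeasurable (ae_of_all _ hfC)⟩

lemma intervalIntegrable_of_abs_le {f : ℝ → ℝ} {C : ℝ} (hf : Measurable f)
    (hfC : ∀ x, |f x| ≤ C) (a b : ℝ) : IntervalIntegrable f volume a b := by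
  simpa using (intervalIntegrable_const (c := (1 : ℝ))).bdd_mul hf hfC

lemma measurable_toIocMod {p : ℝ} (hp : 0 < p) (a : ℝ) : Measurable (toIocMod hp a) := by
  simp_rw [funext (toIocMod_eq_sub_fract_mul hp a)]
  fun_prop

lemma ae_μT : ae μT = ae (volume.restrict (Ioc (-π) π)) :=
  Measure.ae_ennreal_smul_measure_eq (ENNReal.inv_ne_zero.2 ENNReal.ofReal_ne_top) _

lemma μT_Ioo_ne_zero {p q : ℝ} (hpq : p < q) (h : Ioo p q ⊆ Ioc (-π) π) : μT (Ioo p q) ≠ 0 := by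
  rw [μT, Measure.smul_apply, Measure.restrict_apply measurableSet_Ioo,
    inter_eq_self_of_subset_left h, Real.volume_Ioo, smul_eq_mul]
  exact mul_ne_zero (ENNReal.inv_ne_zero.2 ENNReal.ofReal_ne_top)
    (ENNReal.ofReal_pos.2 (sub_pos.2 hpq)).ne'

lemma le_convOpNorm {N : (ℝ → ℂ) → ℝ≥0∞} {f : ℝ → ℂ} (K : ℝ → ℂ) (hf : Measurable f)
    (hper : Function.Periodic f (2 * π)) (hN : N f ≤ 1) : N (conv f K) ≤ convOpNorm N K :=
  le_iSup₂ (f := fun g (_ : g ∈ {f : ℝ → ℂ | Measurable f ∧ Function.Periodic f (2 * π) ∧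
    N f ≤ 1}) => N (conv g K)) f ⟨hf, hper, hN⟩

lemma conv_ofReal (F K : ℝ → ℝ) (θ : ℝ) :
    conv (fun x => (F x : ℂ)) (fun x => (K x : ℂ)) θ =
      (((2 * π)⁻¹ * ∫ φ in (-π)..π, F (θ - φ) * K φ : ℝ) : ℂ) := by
  simp only [conv, ← Complex.ofReal_mul, intervalIntegral.integral_ofReal, Complex.real_smul]

lemma mul_integral_le_integral_mul {F K : ℝ → ℝ} {u v c d s : ℝ} (huc : u ≤ c) (hcd : c ≤ d)
    (hdv : d ≤ v) (hF : 0 ≤ F) (hK : 0 ≤ᵐ[volume.restrict (Ioc u v)] K)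
    (hFs : ∀ x ∈ Icc c d, F x = s) (hFK : IntervalIntegrable (fun x => F x * K x) volume u v) :
    s * ∫ x in c..d, K x ≤ ∫ x in u..v, F x * K x := by
  rw [← intervalIntegral.integral_const_mul]
  have hEq : EqOn (fun x => F x * K x) (fun x => s * K x) (uIcc c d) := fun x hx => by
    simp only [hFs x (by rwa [uIcc_of_le hcd] at hx)]
  rw [← intervalIntegral.integral_congr hEq]
  exact intervalIntegral.integral_mono_interval huc hcd hdv
    (hK.mono fun x hx => mul_nonneg (hF x) hx) hFK

def circleBump (a b s θ : ℝ) : ℝ :=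
  (Icc a b).indicator (fun _ => s) (toIocMod two_pi_pos (-π) θ)

section circleBump

variable {a b s : ℝ}

lemma measurable_circleBump : Measurable (circleBump a b s) :=
  measurable_const.indicator measurableSet_Icc |>.comp (measurable_toIocMod two_pi_pos _)

lemma periodic_circleBump : Function.Periodic (circleBump a b s) (2 * π) := fun θ => by
  simp only [circleBump, toIocMod_add_right]

lemma circleBump_nonneg (hs : 0 ≤ s) : 0 ≤ circleBump a b s := fun _ =>
  indicator_nonneg (fun _ _ => hs) _

lemma abs_circleBump_le (θ : ℝ) : |circleBump a b s θ| ≤ |s| := by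
  unfold circleBump
  by_cases h : toIocMod two_pi_pos (-π) θ ∈ Icc a b <;> simp [h]

lemma circleBump_of_mem {θ : ℝ} (hθ : θ ∈ Ioc (-π) π) :
    circleBump a b s θ = (Icc a b).indicator (fun _ => s) θ := by
  rw [circleBump, (toIocMod_eq_self _).2 (by rwa [neg_add_eq_sub, two_mul, add_sub_cancel_right])]

lemma weightedLinftyNorm_circleBump_le_one {w : ℝ → ℝ} (hw : ∀ θ ∈ Icc a b, w θ = s) :
    weightedLinftyNorm w (fun θ => (circleBump a b s θ : ℂ)) ≤ 1 := by
  refine essSup_le_of_ae_le 1 ?_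
  rw [Filter.EventuallyLE, ae_μT, ae_restrict_iff' measurableSet_Ioc]
  refine ae_of_all _ fun θ hθ => ?_
  dsimp only
  rw [circleBump_of_mem hθ]
  by_cases hab : θ ∈ Icc a b
  · simp only [indicator_of_mem hab, Complex.nnnorm_real, hw θ hab]
    exact ENNReal.div_self_le_one
  · simp [indicator_of_notMem hab]

variable {K w : ℝ → ℝ} {δ θ : ℝ}

lemma mul_integral_le_integral_circleBump_mul (hK : IntervalIntegrable K volume (-π) π)
    (hK0 : 0 ≤ᵐ[volume.restrict (Ioc (-π) π)] K) (ha : 0 ≤ a) (hb : b ≤ π) (hs : 0 ≤ s)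
    (hδab : δ < b - a) (hθ : θ ∈ Ioo (a - δ) a) :
    s * ∫ φ in -(b - a)..-δ, K φ ≤ ∫ φ in (-π)..π, circleBump a b s (θ - φ) * K φ := by
  have hbump : ∀ φ ∈ Icc (-(b - a)) (-δ), circleBump a b s (θ - φ) = s := fun φ hφ => by
    have hmem : θ - φ ∈ Icc a b := ⟨by linarith [hθ.1, hφ.2], by linarith [hθ.2, hφ.1]⟩
    rw [circleBump_of_mem ⟨by linarith [hmem.1, pi_pos], hmem.2.trans hb⟩, indicator_of_mem hmem]
  refine mul_integral_le_integral_mul (by linarith) (by linarith) (by linarith [hθ.1, hθ.2])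
    (fun φ => circleBump_nonneg hs (θ - φ)) hK0 hbump ?_
  exact hK.bdd_mul (measurable_circleBump.comp (measurable_const.sub measurable_id))
    fun _ => abs_circleBump_le _

lemma ofReal_le_nnnorm_conv_circleBump_div (hK : IntervalIntegrable K volume (-π) π)
    (hK0 : 0 ≤ᵐ[volume.restrict (Ioc (-π) π)] K) (ha : 0 ≤ a) (hb : b ≤ π) (hs : 0 ≤ s)
    (hδab : δ < b - a) (hθ : θ ∈ Ioo (a - δ) a) (hw : w θ = 1)
    (hmass : π / 4 ≤ ∫ φ in -(b - a)..-δ, K φ) :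
    ENNReal.ofReal (s / 8) ≤ (‖conv (fun x => (circleBump a b s x : ℂ)) (fun x => (K x : ℂ)) θ‖₊
      : ℝ≥0∞) / (‖w θ‖₊ : ℝ≥0∞) := by
  rw [hw, nnnorm_one, ENNReal.coe_one, div_one, conv_ofReal, Complex.nnnorm_real]
  refine (ENNReal.ofReal_le_ofReal ?_).trans (Real.ofReal_le_enorm _)
  calc s / 8 = (2 * π)⁻¹ * (s * (π / 4)) := by field_simp; ring
    _ ≤ (2 * π)⁻¹ * (s * ∫ φ in -(b - a)..-δ, K φ) := by gcongr
    _ ≤ (2 * π)⁻¹ * ∫ φ in (-π)..π, circleBump a b s (θ - φ) * K φ := by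
      gcongr
      exact mul_integral_le_integral_circleBump_mul hK hK0 ha hb hs hδab hθ

end circleBump

lemma wght_of_mem_spike {m : ℕ} (hm : 1 ≤ m) {θ : ℝ} (h₁ : π / (2 * m) ≤ |θ|)
    (h₂ : |θ| ≤ π / (2 * m - 1)) : wght θ = √m := by
  have hcast : ((m - 1 : ℕ) : ℝ) + 1 = m := by rw [Nat.cast_sub hm]; ring
  rw [wght, tsum_eq_single (m - 1), hcast, indicator_of_mem]
  · ring
  · exact ⟨h₁, h₂⟩
  intro j hj
  refine mul_eq_zero_of_right _ (indicator_of_notMem (fun hj' => ?_) _)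
  obtain ⟨hj₁, hj₂⟩ := hj'
  rcases Nat.lt_or_gt_of_ne hj with hlt | hgt
  · have hjm : (j : ℝ) + 2 ≤ m := by exact_mod_cast (by omega : j + 2 ≤ m)
    have := div_lt_div_of_pos_left pi_pos (by positivity)
      (by linarith : 2 * ((j : ℝ) + 1) < 2 * m - 1)
    linarith
  · have hjm : (m : ℝ) ≤ j := by exact_mod_cast (by omega : m ≤ j)
    have := div_lt_div_of_pos_left pi_pos (by positivity)
      (by linarith : 2 * (m : ℝ) < 2 * ((j : ℝ) + 1) - 1)
    linarith

lemma wght_of_mem_gap {m : ℕ} {θ : ℝ} (h₁ : π / (2 * m + 1) < |θ|) (h₂ : |θ| < π / (2 * m)) :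
    wght θ = 1 := by
  rw [wght, add_eq_left, tsum_congr (β := ℕ) fun j => ?_, tsum_zero]
  refine mul_eq_zero_of_right _ (indicator_of_notMem (fun hj => ?_) _)
  obtain ⟨hj₁, hj₂⟩ := hj
  rcases le_or_gt ((j : ℝ) + 1) m with hle | hgt
  · have := div_le_div_of_nonneg_left pi_pos.le (by positivity)
      (by linarith : 2 * ((j : ℝ) + 1) ≤ 2 * m)
    linarith
  · have hjm : (m : ℝ) ≤ j := by exact_mod_cast Nat.lt_succ_iff.1 (by exact_mod_cast hgt)
    have := div_le_div_of_nonneg_left pi_pos.le (by positivity)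
      (by linarith : 2 * (m : ℝ) + 1 ≤ 2 * ((j : ℝ) + 1) - 1)
    linarith

lemma integral_neg_pi_zero_of_symm {K : ℝ → ℝ} (hK : ∀ u v, IntervalIntegrable K volume u v)
    (hsym : ∀ᵐ φ ∂volume.restrict (Ioc (-π) π), K (-φ) = K φ)
    (hmean : ∫ φ in (-π)..π, K φ = 2 * π) : ∫ φ in (-π)..0, K φ = π := by
  have hhalves : ∫ φ in (-π)..0, K φ = ∫ φ in 0..π, K φ := by
    have hreflect := intervalIntegral.integral_comp_neg (a := 0) (b := π) K
    rw [neg_zero] at hreflect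
    rw [← hreflect]
    refine intervalIntegral.integral_congr_ae ?_
    rw [ae_restrict_iff' measurableSet_Ioc] at hsym
    filter_upwards [hsym] with φ hφ hmem
    rw [uIoc_of_le pi_pos.le] at hmem
    exact hφ ⟨by linarith [hmem.1, pi_pos], hmem.2⟩
  linarith [intervalIntegral.integral_add_adjacent_intervals (hK (-π) 0) (hK 0 π)]

lemma pi_div_two_le_integral_of_le_half {K : ℝ → ℝ}
    (hK : ∀ u v, IntervalIntegrable K volume u v)
    (hsym : ∀ᵐ φ ∂volume.restrict (Ioc (-π) π), K (-φ) = K φ)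
    (hmean : ∫ φ in (-π)..π, K φ = 2 * π) {L : ℝ} (hL : 0 ≤ L) (hLπ : L ≤ π)
    (htail : ∀ φ ∈ Icc (-π) (-L), K φ ≤ 1 / 2) : π / 2 ≤ ∫ φ in (-L)..0, K φ := by
  have htail_int : ∫ φ in (-π)..(-L), K φ ≤ ∫ _ in (-π)..(-L), (1 / 2 : ℝ) :=
    intervalIntegral.integral_mono_on (by linarith) (hK _ _) intervalIntegrable_const htail
  rw [intervalIntegral.integral_const, smul_eq_mul] at htail_int
  linarith [integral_neg_pi_zero_of_symm hK hsym hmean,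
    intervalIntegral.integral_add_adjacent_intervals (hK (-π) (-L)) (hK (-L) 0)]

lemma exists_lt_integral_neg {f : ℝ → ℝ} (hf : ∀ u v, IntervalIntegrable f volume u v)
    {a t η : ℝ} (ht : t < ∫ x in a..0, f x) (hη : 0 < η) :
    ∃ δ ∈ Ioo 0 η, t < ∫ x in a..-δ, f x := by
  have hcont : Continuous fun δ => ∫ x in a..-δ, f x :=
    (intervalIntegral.continuous_primitive hf a).comp continuous_neg
  have hnear : ∀ᶠ δ in 𝓝[>] 0, t < ∫ x in a..-δ, f x :=
    nhdsWithin_le_nhds (hcont.tendsto' 0 _ (by rw [neg_zero]) |>.eventually_const_lt ht)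
  exact (hnear.and (Ioo_mem_nhdsGT hη)).exists.imp fun δ h => ⟨h.2, h.1⟩

lemma exists_le_of_tendsto_iSup {K : ℕ → ℝ → ℝ} (hbdd : ∀ n, ∃ C : ℝ, ∀ θ, |K n θ| ≤ C)
    {ε c : ℝ} (hc : 0 < c)
    (hloc : Tendsto (fun n => ⨆ θ : {θ : ℝ // ε ≤ |θ| ∧ |θ| ≤ π}, K n (θ : ℝ)) atTop (𝓝 0)) :
    ∃ n, ∀ φ, ε ≤ |φ| → |φ| ≤ π → K n φ ≤ c := by
  obtain ⟨n, hn⟩ := (hloc.eventually_lt_const hc).exists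
  obtain ⟨C, hC⟩ := hbdd n
  have hbddAbove : BddAbove (range fun θ : {θ : ℝ // ε ≤ |θ| ∧ |θ| ≤ π} => K n θ) :=
    ⟨C, forall_mem_range.2 fun θ => (abs_le.1 (hC θ)).2⟩
  exact ⟨n, fun φ h₁ h₂ => (le_ciSup hbddAbove ⟨φ, h₁, h₂⟩).trans hn.le⟩

lemma exists_quarter_lt_integral {K : ℕ → ℝ → ℝ}
    (hK : ∀ n u v, IntervalIntegrable (K n) volume u v) (hbdd : ∀ n, ∃ C : ℝ, ∀ θ, |K n θ| ≤ C)
    (hsym : ∀ n, ∀ᵐ θ ∂μT, K n (-θ) = K n θ) (hmean : ∀ n, ∫ θ in (-π)..π, K n θ = 2 * π)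
    (hloc : ∀ ε : ℝ, 0 < ε →
      Tendsto (fun n => ⨆ θ : {θ : ℝ // ε ≤ |θ| ∧ |θ| ≤ π}, K n (θ : ℝ)) atTop (𝓝 0))
    {L η : ℝ} (hL : 0 < L) (hLπ : L ≤ π) (hη : 0 < η) :
    ∃ n, ∃ δ ∈ Ioo 0 η, π / 4 < ∫ φ in -L..-δ, K n φ := by
  obtain ⟨n, hn⟩ := exists_le_of_tendsto_iSup hbdd one_half_pos (hloc L hL)
  have hmass : π / 2 ≤ ∫ φ in -L..0, K n φ :=
    pi_div_two_le_integral_of_le_half (hK n) (ae_μT ▸ hsym n) (hmean n) hL.le hLπ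
      fun φ hφ => hn φ (by rw [abs_of_neg (by linarith [hφ.2])]; linarith [hφ.2])
        (by rw [abs_of_neg (by linarith [hφ.2])]; linarith [hφ.1])
  exact ⟨n, exists_lt_integral_neg (hK n) (by linarith [pi_pos]) hη⟩

lemma ofReal_sqrt_div_eight_le_iSup_convOpNorm {K : ℕ → ℝ → ℝ}
    (hmeas : ∀ n, Measurable (K n)) (hbdd : ∀ n, ∃ C : ℝ, ∀ θ, |K n θ| ≤ C)
    (hpos : ∀ n, ∀ᵐ θ ∂μT, 0 ≤ K n θ) (hsym : ∀ n, ∀ᵐ θ ∂μT, K n (-θ) = K n θ)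
    (hmean : ∀ n, ∫ θ in (-π)..π, K n θ = 2 * π)
    (hloc : ∀ ε : ℝ, 0 < ε →
      Tendsto (fun n => ⨆ θ : {θ : ℝ // ε ≤ |θ| ∧ |θ| ≤ π}, K n (θ : ℝ)) atTop (𝓝 0))
    {m : ℕ} (hm : 1 ≤ m) :
    ENNReal.ofReal (√m / 8) ≤
      ⨆ n, convOpNorm (weightedLinftyNorm wght) (fun θ => (K n θ : ℂ)) := by
  have hK : ∀ n u v, IntervalIntegrable (K n) volume u v := fun n =>
    let ⟨_, hC⟩ := hbdd n
    intervalIntegrable_of_abs_le (hmeas n) hC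
  have hm' : (1 : ℝ) ≤ m := by exact_mod_cast hm
  set a := π / (2 * m)
  set b := π / (2 * m - 1)
  have ha : 0 < a := by positivity
  have hab : a < b := div_lt_div_of_pos_left pi_pos (by linarith) (by linarith)
  have hbπ : b ≤ π := div_le_self pi_pos.le (by linarith)
  have hgap : π / (2 * m + 1) < a := div_lt_div_of_pos_left pi_pos (by linarith) (by linarith)
  obtain ⟨n, δ, ⟨hδ, hδlt⟩, hmass⟩ := exists_quarter_lt_integral hK hbdd hsym hmean hloc
    (sub_pos.2 hab) (by linarith) (lt_min (sub_pos.2 hab) (sub_pos.2 hgap))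
  have hδab : δ < b - a := hδlt.trans_le (min_le_left _ _)
  have hgap0 : 0 < π / (2 * m + 1) := by positivity
  have hIoo : Ioo (a - δ) a ⊆ Ioo (π / (2 * m + 1)) a := fun θ hθ =>
    ⟨by linarith [hθ.1, min_le_right (b - a) (a - π / (2 * m + 1))], hθ.2⟩
  have habs : ∀ θ ∈ Ioo (a - δ) a, |θ| = θ := fun θ hθ =>
    abs_of_pos (hgap0.trans (hIoo hθ).1)
  have hlow : ∀ θ ∈ Ioo (a - δ) a, ENNReal.ofReal (√m / 8) ≤
      (‖conv (fun x => (circleBump a b √m x : ℂ)) (fun x => (K n x : ℂ)) θ‖₊ : ℝ≥0∞) /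
        (‖wght θ‖₊ : ℝ≥0∞) := fun θ hθ =>
    ofReal_le_nnnorm_conv_circleBump_div (hK n _ _) (ae_μT ▸ hpos n) ha.le hbπ (sqrt_nonneg _)
      hδab hθ (wght_of_mem_gap (by rw [habs θ hθ]; exact (hIoo hθ).1)
        (by rw [habs θ hθ]; exact hθ.2)) hmass.le
  have hspike : ∀ θ ∈ Icc a b, wght θ = √m := fun θ hθ => by
    have habs : |θ| = θ := abs_of_pos (ha.trans_le hθ.1)
    exact wght_of_mem_spike hm (by rw [habs]; exact hθ.1) (by rw [habs]; exact hθ.2)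
  calc ENNReal.ofReal (√m / 8)
      ≤ weightedLinftyNorm wght
          (conv (fun x => (circleBump a b √m x : ℂ)) (fun x => (K n x : ℂ))) :=
        le_essSup_of_forall_le (μT_Ioo_ne_zero (by linarith) fun θ hθ =>
          ⟨by linarith [(hIoo hθ).1, pi_pos], by linarith [hθ.2]⟩) hlow
    _ ≤ convOpNorm (weightedLinftyNorm wght) (fun x => (K n x : ℂ)) :=
        le_convOpNorm _ (Complex.measurable_ofReal.comp measurable_circleBump)
          (fun θ => by simp only [periodic_circleBump θ])
          (weightedLinftyNorm_circleBump_le_one hspike)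
    _ ≤ _ := le_iSup (fun n => convOpNorm (weightedLinftyNorm wght) (fun x => (K n x : ℂ))) n

theorem stmt_6_general (K : ℕ → ℝ → ℝ)
    (hmeas : ∀ n, Measurable (K n))
    (hbdd : ∀ n, ∃ C : ℝ, ∀ θ, |K n θ| ≤ C)
    (hpos : ∀ n, ∀ᵐ θ ∂μT, 0 ≤ K n θ)
    (hsym : ∀ n, ∀ᵐ θ ∂μT, K n (-θ) = K n θ)
    (hmean : ∀ n, ∫ θ in (-π)..π, K n θ = 2 * π)
    (hloc : ∀ ε : ℝ, 0 < ε →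
      Tendsto (fun n => ⨆ θ : {θ : ℝ // ε ≤ |θ| ∧ |θ| ≤ π}, K n (θ : ℝ)) atTop (𝓝 0)) :
    (⨆ n, convOpNorm
        (fun g => essSup (fun θ => (‖g θ‖₊ : ℝ≥0∞) / (‖wght θ‖₊ : ℝ≥0∞)) μT)
        (fun θ => (K n θ : ℂ))) = ⊤ := by
  refine ENNReal.eq_top_of_forall_nnreal_le fun r => ?_
  obtain ⟨m, hm⟩ := exists_nat_ge ((8 * r : ℝ) ^ 2)
  have hsqrt : 8 * (r : ℝ) ≤ √(m + 1 : ℕ) := Real.le_sqrt_of_sq_le (by push_cast; linarith)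
  calc (r : ℝ≥0∞) = ENNReal.ofReal r := (ENNReal.ofReal_coe_nnreal).symm
    _ ≤ ENNReal.ofReal (√(m + 1 : ℕ) / 8) := ENNReal.ofReal_le_ofReal (by linarith)
    _ ≤ _ := ofReal_sqrt_div_eight_le_iSup_convOpNorm hmeas hbdd hpos hsym hmean hloc (by omega)

/-- For any sequence of bounded, nonnegative, symmetric kernels `K_n` with unit
mean and the localization property, the convolution operators `C_{K_n}` are not uniformly
bounded on `L^∞(w⁻¹)` with the special weight `w`: `sup_n ‖C_{K_n}‖_{B(L^∞(w⁻¹))} = ∞`. -/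
theorem stmt_6 (K : ℕ → ℝ → ℝ)
    (hmeas : ∀ n, Measurable (K n)) (hper : ∀ n, Function.Periodic (K n) (2 * π))
    (hbdd : ∀ n, ∃ C : ℝ, ∀ θ, |K n θ| ≤ C)
    (hpos : ∀ n, ∀ᵐ θ ∂μT, 0 ≤ K n θ)
    (hsym : ∀ n, ∀ᵐ θ ∂μT, K n (-θ) = K n θ)
    (hmean : ∀ n, ∫ θ in (-π)..π, K n θ = 2 * π)
    (hloc : ∀ ε : ℝ, 0 < ε →
      Tendsto (fun n => ⨆ θ : {θ : ℝ // ε ≤ |θ| ∧ |θ| ≤ π}, K n (θ : ℝ)) atTop (𝓝 0)) :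
    (⨆ n, convOpNorm
        (fun g => essSup (fun θ => (‖g θ‖₊ : ℝ≥0∞) / (‖wght θ‖₊ : ℝ≥0∞)) μT)
        (fun θ => (K n θ : ℂ))) = ⊤ :=
  stmt_6_general K hmeas hbdd hpos hsym hmean hloc
end
end
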